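/- Let X be a second countable Baire complex topological vector space, C a continuous linear operator on X with dense range, and (S(z))_{z ∈ ℂ} an entire C-regularized group of operators on X. Then (S(z))_{z ∈ ℂ} is diskcyclic (i.e., the set {S(z) : z ∈ ℂ} is diskcyclic) if and only if (S(z))_{z ∈ ℂ} is disk transitive (i.e., the set {S(z) : z ∈ ℂ} is disk transitive). -/

import Mathlib

/-!
Disk transitivity gives diskcyclicity by the Baire category argument of Birkhoff's transitivity
theorem, applied to the family of maps `x ↦ α • S z x` with `‖α‖ ≤ 1`.

Conversely, if the disk orbit of `x` is dense, then every nonempty open set contains a point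
`α • S z x` with `α ≠ 0`. Take `β • S w x ∈ U`; since `β • C` has dense range, some
`β • C (δ • S v x)` lies in `V`. The group law `S (v - w) ∘ S w = S v ∘ C`, together with the
fact that `C` commutes with every `S v`, then shows that `S (v - w)` maps `δ • (β • S w x)` into `V`.
-/

open scoped Pointwise
open Filter Set Topology

theorem dense_setOf_dense_range_of_isTransitive {X ι : Type*} [TopologicalSpace X]
    [SecondCountableTopology X] [BaireSpace X] {T : ι → X → X} (hT : ∀ i, Continuous (T i))
    (htrans : ∀ U V : Set X, IsOpen U → IsOpen V → U.Nonempty → V.Nonempty →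
      ∃ i, (T i '' U ∩ V).Nonempty) :
    Dense {x | Dense (range fun i => T i x)} := by
  obtain ⟨b, hbc, hb_ne, hb⟩ := TopologicalSpace.exists_countable_basis X
  have hopen : ∀ V ∈ b, IsOpen (⋃ i, T i ⁻¹' V) := fun V hV =>
    isOpen_iUnion fun i => (hb.isOpen hV).preimage (hT i)
  have hdense : ∀ V ∈ b, Dense (⋃ i, T i ⁻¹' V) := by
    intro V hV
    refine dense_iff_inter_open.2 fun U hU hU_ne => ?_
    obtain ⟨i, _, ⟨u, hu, rfl⟩, hiV⟩ := htrans U V hU (hb.isOpen hV) hU_ne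
      (nonempty_iff_ne_empty.2 fun h => hb_ne (h ▸ hV))
    exact ⟨u, hu, mem_iUnion.2 ⟨i, hiV⟩⟩
  refine (dense_biInter_of_isOpen hopen hbc hdense).mono fun x hx => hb.dense_iff.2 ?_
  intro V hV _
  obtain ⟨i, hi⟩ := mem_iUnion.1 (mem_iInter₂.1 hx V hV)
  exact ⟨T i x, hi, i, rfl⟩

theorem commute_of_map_add_mul {G M : Type*} [AddZeroClass G] [Monoid M] {C : M} {S : G → M}
    (hS0 : S 0 = C) (hSadd : ∀ z w, S (z + w) * C = S z * S w) (v : G) : Commute C (S v) :=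
  calc C * S v = S (0 + v) * C := by rw [hSadd, hS0]
    _ = S v * C := by rw [zero_add]

section DiskOrbit

variable {𝕜 X ι : Type*} [NontriviallyNormedField 𝕜] [AddCommGroup X] [Module 𝕜 X]
  [TopologicalSpace X] [ContinuousSMul 𝕜 X]

def diskOrbit (S : ι → X →L[𝕜] X) (x : X) : Set X :=
  {y | ∃ α : 𝕜, ‖α‖ ≤ 1 ∧ ∃ z, y = α • S z x}

theorem exists_ne_zero_smul_mem_of_dense_diskOrbit {S : ι → X →L[𝕜] X} {x : X}
    (hx : Dense (diskOrbit S x)) {U : Set X} (hU : IsOpen U) (hU_ne : U.Nonempty) :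
    ∃ α : 𝕜, α ≠ 0 ∧ ‖α‖ ≤ 1 ∧ ∃ z, α • S z x ∈ U := by
  obtain ⟨_, hyU, α, hα, z, rfl⟩ := hx.inter_open_nonempty U hU hU_ne
  rcases ne_or_eq α 0 with hα0 | rfl
  · exact ⟨α, hα0, hα, z, hyU⟩
  -- `U` is a neighbourhood of `0 = 0 • S z x`, so small nonzero multiples of `S z x` lie in it.
  have hsmall : ∀ᶠ t in 𝓝[≠] (0 : 𝕜), t ≠ 0 ∧ ‖t‖ ≤ 1 ∧ t • S z x ∈ U := by
    have hcont : Continuous fun t : 𝕜 => t • S z x := by fun_prop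
    filter_upwards [self_mem_nhdsWithin,
      nhdsWithin_le_nhds (Metric.closedBall_mem_nhds _ one_pos),
      nhdsWithin_le_nhds (hcont.continuousAt.preimage_mem_nhds (hU.mem_nhds hyU))]
      with t ht0 ht htU
    exact ⟨ht0, mem_closedBall_zero_iff.1 ht, htU⟩
  obtain ⟨t, ht0, ht, htU⟩ := hsmall.exists
  exact ⟨t, ht0, ht, z, htU⟩

theorem dense_diskOrbit_of_diskTransitive [SecondCountableTopology X] [BaireSpace X]
    {S : ι → X →L[𝕜] X}
    (h : ∀ U V : Set X, IsOpen U → IsOpen V → U.Nonempty → V.Nonempty →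
      ∃ α : 𝕜, α ≠ 0 ∧ ‖α‖ ≤ 1 ∧ ∃ z, (⇑(S z) '' (α • U) ∩ V).Nonempty) :
    ∃ x, Dense (diskOrbit S x) := by
  let T : Metric.closedBall (0 : 𝕜) 1 × ι → X → X := fun p x => (p.1 : 𝕜) • S p.2 x
  have htrans : ∀ U V : Set X, IsOpen U → IsOpen V → U.Nonempty → V.Nonempty →
      ∃ p, (T p '' U ∩ V).Nonempty := by
    intro U V hU hV hU_ne hV_ne
    obtain ⟨α, -, hα, z, _, ⟨_, ⟨u, hu, rfl⟩, rfl⟩, hV'⟩ := h U V hU hV hU_ne hV_ne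
    refine ⟨(⟨α, by simpa using hα⟩, z), _, ⟨u, hu, rfl⟩, ?_⟩
    simpa [T] using hV'
  obtain ⟨x, hx⟩ :=
    (dense_setOf_dense_range_of_isTransitive (fun _ => by fun_prop) htrans).nonempty
  refine ⟨x, hx.mono ?_⟩
  rintro _ ⟨⟨α, z⟩, rfl⟩
  exact ⟨α, mem_closedBall_zero_iff.1 α.2, z, rfl⟩

theorem diskTransitive_of_dense_diskOrbit {G : Type*} [AddGroup G] {C : X →L[𝕜] X}
    (hC : DenseRange C) {S : G → X →L[𝕜] X} (hS0 : S 0 = C)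
    (hSadd : ∀ z w, S (z + w) ∘L C = S z ∘L S w) {x : X} (hx : Dense (diskOrbit S x)) :
    ∀ U V : Set X, IsOpen U → IsOpen V → U.Nonempty → V.Nonempty →
      ∃ α : 𝕜, α ≠ 0 ∧ ‖α‖ ≤ 1 ∧ ∃ z, (⇑(S z) '' (α • U) ∩ V).Nonempty := by
  intro U V hU hV hU_ne ⟨v₀, hv₀⟩
  obtain ⟨β, hβ0, -, w, hβU⟩ := exists_ne_zero_smul_mem_of_dense_diskOrbit hx hU hU_ne
  have hW_ne : ((fun y => β • C y) ⁻¹' V).Nonempty :=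
    hC.exists_mem_open (hV.preimage (continuous_const_smul β))
      ⟨β⁻¹ • v₀, by simpa [smul_inv_smul₀ hβ0] using hv₀⟩
  obtain ⟨δ, hδ0, hδ, v, hvV⟩ :=
    exists_ne_zero_smul_mem_of_dense_diskOrbit hx (hV.preimage (by fun_prop)) hW_ne
  refine ⟨δ, hδ0, hδ, v - w, S (v - w) (δ • β • S w x), ⟨_, smul_mem_smul_set hβU, rfl⟩, ?_⟩
  have hshift : S (v - w) (S w x) = C (S v x) := by
    rw [← ContinuousLinearMap.comp_apply, ← hSadd, sub_add_cancel]
    exact congrArg (· x) (commute_of_map_add_mul hS0 hSadd v).eq.symm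
  rwa [map_smul, map_smul, hshift, smul_comm δ β, ← map_smul]

end DiskOrbit

theorem stmt_18_general {X : Type*} [AddCommGroup X] [Module ℂ X] [TopologicalSpace X]
    [ContinuousSMul ℂ X] [SecondCountableTopology X]
    [BaireSpace X]
    (C : X →L[ℂ] X) (hC : DenseRange ⇑C)
    (S : ℂ → X →L[ℂ] X)
    (hS0 : S 0 = C)
    (hSadd : ∀ z w : ℂ, S (z + w) ∘L C = S z ∘L S w) :
    (∃ x : X, Dense {y : X | ∃ α : ℂ, ‖α‖ ≤ 1 ∧ ∃ z : ℂ, y = α • S z x}) ↔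
    (∀ U V : Set X, IsOpen U → IsOpen V → U.Nonempty → V.Nonempty →
      ∃ α : ℂ, α ≠ 0 ∧ ‖α‖ ≤ 1 ∧ ∃ z : ℂ, (⇑(S z) '' (α • U) ∩ V).Nonempty) := by
  exact ⟨fun ⟨x, hx⟩ => diskTransitive_of_dense_diskOrbit hC hS0 hSadd hx,
    dense_diskOrbit_of_diskTransitive⟩

/-- An entire `C`-regularized group of operators (with `C` of dense range) on a second
countable Baire complex topological vector space is diskcyclic if and only if it is
disk transitive. -/
theorem stmt_18 {X : Type*} [AddCommGroup X] [Module ℂ X] [TopologicalSpace X]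
    [IsTopologicalAddGroup X] [ContinuousSMul ℂ X] [SecondCountableTopology X]
    [BaireSpace X]
    (C : X →L[ℂ] X) (hC : DenseRange ⇑C)
    (S : ℂ → X →L[ℂ] X)
    (hS0 : S 0 = C)
    (hSadd : ∀ z w : ℂ, S (z + w) ∘L C = S z ∘L S w)
    (hSent : ∀ (x : X) (f : X →L[ℂ] ℂ), Differentiable ℂ fun z : ℂ => f (S z x)) :
    (∃ x : X, Dense {y : X | ∃ α : ℂ, ‖α‖ ≤ 1 ∧ ∃ z : ℂ, y = α • S z x}) ↔
    (∀ U V : Set X, IsOpen U → IsOpen V → U.Nonempty → V.Nonempty →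
      ∃ α : ℂ, α ≠ 0 ∧ ‖α‖ ≤ 1 ∧ ∃ z : ℂ, (⇑(S z) '' (α • U) ∩ V).Nonempty) :=
  stmt_18_general C hC S hS0 hSadd
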